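/- The rotational shape functions Nx2 and Nx3 satisfy the Kronecker delta property: Nx2(Pj) = Nx3(Pj) = 0 for j = 1,2,3; ∂Nx2/∂x(Pj) = ∂Nx3/∂x(Pj) = 0 for j = 1,2,3; ∂Nx2/∂y(P2) = 1 and ∂Nx2/∂y(P1) = ∂Nx2/∂y(P3) = 0; ∂Nx3/∂y(P3) = 1 and ∂Nx3/∂y(P1) = ∂Nx3/∂y(P2) = 0. -/

import Mathlib

noncomputable section

/-- Area coordinate `L1(x,y) = 1 - x/a - y/b`. -/
def L1 (a b : ℝ) (x y : ℝ) : ℝ := 1 - x / a - y / b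

/-- Area coordinate `L2(x,y) = x/a - (1/h - 1/b)·y`. -/
def L2 (a h b : ℝ) (x y : ℝ) : ℝ := x / a - (1 / h - 1 / b) * y

/-- Area coordinate `L3(x,y) = y/h`. -/
def L3 (h : ℝ) (x y : ℝ) : ℝ := y / h

/-- Rotational shape function `Nx2 = h·(L2²L3 + ½L1L2L3)`. -/
def Nx2 (a h b : ℝ) (x y : ℝ) : ℝ :=
  h * ((L2 a h b x y) ^ 2 * L3 h x y + (1 / 2) * L1 a b x y * L2 a h b x y * L3 h x y)

/-- Rotational shape function `Nx3 = -h·(L3²L1 + L2L3² + L1L2L3)`. -/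
def Nx3 (a h b : ℝ) (x y : ℝ) : ℝ :=
  -h * ((L3 h x y) ^ 2 * L1 a b x y + L2 a h b x y * (L3 h x y) ^ 2
    + L1 a b x y * L2 a h b x y * L3 h x y)

/-- Partial derivative in the first variable. -/
def pdx (f : ℝ → ℝ → ℝ) (x y : ℝ) : ℝ := deriv (fun t => f t y) x

/-- Partial derivative in the second variable. -/
def pdy (f : ℝ → ℝ → ℝ) (x y : ℝ) : ℝ := deriv (fun t => f x t) y

/-! At the node `Pₙ` the area coordinates take the values `Lᵢ = δᵢₙ`. Along any line the
derivative of a cubic in `L₁, L₂, L₃` is, by the chain rule, a combination of the constant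
derivatives `dᵢ` of the `Lᵢ`, and at `Pₙ` only the monomials divisible by `Lₙ²` contribute.
For `Nx2` this is `L₂²L₃`, giving `h·d₃` at `P₂`; for `Nx3` it is `L₃²L₁ + L₂L₃²`, giving
`-h·(d₁ + d₂) = h·d₃` at `P₃`, because `L₁ + L₂ + L₃ = 1`. Finally `∂L₃/∂x = 0` and
`∂L₃/∂y = 1/h`. -/

section AreaCoordinates

variable (a h b x y : ℝ)

theorem hasDerivAt_L1_fst : HasDerivAt (fun t => L1 a b t y) (-(1 / a)) x := by
  unfold L1
  simpa using (((hasDerivAt_id x).div_const a).const_sub 1).sub_const (y / b)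

theorem hasDerivAt_L2_fst : HasDerivAt (fun t => L2 a h b t y) (1 / a) x := by
  unfold L2
  simpa using ((hasDerivAt_id x).div_const a).sub_const ((1 / h - 1 / b) * y)

theorem hasDerivAt_L3_fst : HasDerivAt (fun t => L3 h t y) 0 x :=
  hasDerivAt_const x (y / h)

theorem hasDerivAt_L1_snd : HasDerivAt (fun t => L1 a b x t) (-(1 / b)) y := by
  unfold L1
  simpa using ((hasDerivAt_id y).div_const b).const_sub (1 - x / a)

theorem hasDerivAt_L2_snd : HasDerivAt (fun t => L2 a h b x t) (-(1 / h - 1 / b)) y := by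
  unfold L2
  simpa using ((hasDerivAt_id y).const_mul (1 / h - 1 / b)).const_sub (x / a)

theorem hasDerivAt_L3_snd : HasDerivAt (fun t => L3 h x t) (1 / h) y := by
  unfold L3
  simpa using (hasDerivAt_id y).div_const h

variable {a h x}

theorem L1_P1 : L1 a b 0 0 = 1 := by simp [L1]

theorem L2_P1 : L2 a h b 0 0 = 0 := by simp [L2]

theorem L1_P2 (ha : a ≠ 0) : L1 a b a 0 = 0 := by simp [L1, ha]

theorem L2_P2 (ha : a ≠ 0) : L2 a h b a 0 = 1 := by simp [L2, ha]

theorem L3_zero : L3 h x 0 = 0 := by simp [L3]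

theorem L1_P3 (ha : a ≠ 0) : L1 a b (a * (1 - h / b)) h = 0 := by
  unfold L1; field_simp; ring

theorem L2_P3 (ha : a ≠ 0) (hh : h ≠ 0) : L2 a h b (a * (1 - h / b)) h = 0 := by
  unfold L2; field_simp; ring

theorem L3_P3 (hh : h ≠ 0) : L3 h (a * (1 - h / b)) h = 1 := by simp [L3, hh]

end AreaCoordinates

section DirectionalDerivatives

/-- The derivative of `Nx2` along a line on which `Lᵢ = lᵢ` and `Lᵢ' = dᵢ`. -/
def dNx2 (h l₁ l₂ l₃ d₁ d₂ d₃ : ℝ) : ℝ :=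
  h * (2 * l₂ * d₂ * l₃ + l₂ ^ 2 * d₃ + 1 / 2 * (d₁ * l₂ * l₃ + l₁ * d₂ * l₃ + l₁ * l₂ * d₃))

/-- The derivative of `Nx3` along a line on which `Lᵢ = lᵢ` and `Lᵢ' = dᵢ`. -/
def dNx3 (h l₁ l₂ l₃ d₁ d₂ d₃ : ℝ) : ℝ :=
  -h * (2 * l₃ * d₃ * l₁ + l₃ ^ 2 * d₁ + (d₂ * l₃ ^ 2 + l₂ * (2 * l₃ * d₃))
    + (d₁ * l₂ * l₃ + l₁ * d₂ * l₃ + l₁ * l₂ * d₃))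

section UnitVectors

variable (h d₁ d₂ d₃ : ℝ)

theorem dNx2_one_zero_zero : dNx2 h 1 0 0 d₁ d₂ d₃ = 0 := by simp [dNx2]

theorem dNx2_zero_one_zero : dNx2 h 0 1 0 d₁ d₂ d₃ = h * d₃ := by simp [dNx2]

theorem dNx2_zero_zero_one : dNx2 h 0 0 1 d₁ d₂ d₃ = 0 := by simp [dNx2]

theorem dNx3_one_zero_zero : dNx3 h 1 0 0 d₁ d₂ d₃ = 0 := by simp [dNx3]

theorem dNx3_zero_one_zero : dNx3 h 0 1 0 d₁ d₂ d₃ = 0 := by simp [dNx3]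

theorem dNx3_zero_zero_one : dNx3 h 0 0 1 d₁ d₂ d₃ = -h * (d₁ + d₂) := by simp [dNx3]

end UnitVectors

variable {u v w : ℝ → ℝ} {u' v' w' t : ℝ}

theorem HasDerivAt.Nx2_form (h : ℝ) (hu : HasDerivAt u u' t) (hv : HasDerivAt v v' t)
    (hw : HasDerivAt w w' t) :
    HasDerivAt (fun s => h * (v s ^ 2 * w s + 1 / 2 * u s * v s * w s))
      (dNx2 h (u t) (v t) (w t) u' v' w') t := by
  refine ((((hv.pow 2).mul hw).add (((hu.const_mul (1 / 2)).mul hv).mul hw)).const_mul h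
    ).congr_deriv ?_
  simp only [dNx2, Pi.mul_apply, Pi.pow_apply]
  ring

theorem HasDerivAt.Nx3_form (h : ℝ) (hu : HasDerivAt u u' t) (hv : HasDerivAt v v' t)
    (hw : HasDerivAt w w' t) :
    HasDerivAt (fun s => -h * (w s ^ 2 * u s + v s * w s ^ 2 + u s * v s * w s))
      (dNx3 h (u t) (v t) (w t) u' v' w') t := by
  refine (((((hw.pow 2).mul hu).add (hv.mul (hw.pow 2))).add
    ((hu.mul hv).mul hw)).const_mul (-h)).congr_deriv ?_
  simp only [dNx3, Pi.mul_apply, Pi.pow_apply]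
  ring

variable (a h b x y : ℝ)

theorem pdx_Nx2 :
    pdx (Nx2 a h b) x y = dNx2 h (L1 a b x y) (L2 a h b x y) (L3 h x y) (-(1 / a)) (1 / a) 0 :=
  ((hasDerivAt_L1_fst a b x y).Nx2_form h (hasDerivAt_L2_fst a h b x y)
    (hasDerivAt_L3_fst h x y)).deriv

theorem pdy_Nx2 :
    pdy (Nx2 a h b) x y =
      dNx2 h (L1 a b x y) (L2 a h b x y) (L3 h x y) (-(1 / b)) (-(1 / h - 1 / b)) (1 / h) :=
  ((hasDerivAt_L1_snd a b x y).Nx2_form h (hasDerivAt_L2_snd a h b x y)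
    (hasDerivAt_L3_snd h x y)).deriv

theorem pdx_Nx3 :
    pdx (Nx3 a h b) x y = dNx3 h (L1 a b x y) (L2 a h b x y) (L3 h x y) (-(1 / a)) (1 / a) 0 :=
  ((hasDerivAt_L1_fst a b x y).Nx3_form h (hasDerivAt_L2_fst a h b x y)
    (hasDerivAt_L3_fst h x y)).deriv

theorem pdy_Nx3 :
    pdy (Nx3 a h b) x y =
      dNx3 h (L1 a b x y) (L2 a h b x y) (L3 h x y) (-(1 / b)) (-(1 / h - 1 / b)) (1 / h) :=
  ((hasDerivAt_L1_snd a b x y).Nx3_form h (hasDerivAt_L2_snd a h b x y)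
    (hasDerivAt_L3_snd h x y)).deriv

end DirectionalDerivatives

theorem Nx2_Nx3_kronecker_delta_general (a h b : ℝ) (ha : 0 < a) (hh : 0 < h) :
    (Nx2 a h b 0 0 = 0 ∧ Nx2 a h b a 0 = 0 ∧ Nx2 a h b (a * (1 - h / b)) h = 0) ∧
    (Nx3 a h b 0 0 = 0 ∧ Nx3 a h b a 0 = 0 ∧ Nx3 a h b (a * (1 - h / b)) h = 0) ∧
    (pdx (Nx2 a h b) 0 0 = 0 ∧ pdx (Nx2 a h b) a 0 = 0 ∧
      pdx (Nx2 a h b) (a * (1 - h / b)) h = 0) ∧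
    (pdx (Nx3 a h b) 0 0 = 0 ∧ pdx (Nx3 a h b) a 0 = 0 ∧
      pdx (Nx3 a h b) (a * (1 - h / b)) h = 0) ∧
    (pdy (Nx2 a h b) a 0 = 1 ∧ pdy (Nx2 a h b) 0 0 = 0 ∧
      pdy (Nx2 a h b) (a * (1 - h / b)) h = 0) ∧
    (pdy (Nx3 a h b) (a * (1 - h / b)) h = 1 ∧ pdy (Nx3 a h b) 0 0 = 0 ∧
      pdy (Nx3 a h b) a 0 = 0) := by
  have ha := ha.ne'
  have hh := hh.ne'
  simp only [Nx2, Nx3, pdx_Nx2, pdx_Nx3, pdy_Nx2, pdy_Nx3, L1_P1, L2_P1, L3_zero, L1_P2 b ha,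
    L2_P2 b ha, L1_P3 b ha, L2_P3 b ha hh, L3_P3 b hh, dNx2_one_zero_zero, dNx2_zero_one_zero,
    dNx2_zero_zero_one, dNx3_one_zero_zero, dNx3_zero_one_zero, dNx3_zero_zero_one]
  norm_num [hh, sub_eq_add_neg]

/-- Kronecker delta property of the rotational shape functions `Nx2`, `Nx3`
at the nodes `P1 = (0,0)`, `P2 = (a,0)`, `P3 = (a(1-h/b), h)`. -/
theorem Nx2_Nx3_kronecker_delta (a h b : ℝ) (ha : 0 < a) (hh : 0 < h) (hb : h ≤ b) :
    (Nx2 a h b 0 0 = 0 ∧ Nx2 a h b a 0 = 0 ∧ Nx2 a h b (a * (1 - h / b)) h = 0) ∧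
    (Nx3 a h b 0 0 = 0 ∧ Nx3 a h b a 0 = 0 ∧ Nx3 a h b (a * (1 - h / b)) h = 0) ∧
    (pdx (Nx2 a h b) 0 0 = 0 ∧ pdx (Nx2 a h b) a 0 = 0 ∧
      pdx (Nx2 a h b) (a * (1 - h / b)) h = 0) ∧
    (pdx (Nx3 a h b) 0 0 = 0 ∧ pdx (Nx3 a h b) a 0 = 0 ∧
      pdx (Nx3 a h b) (a * (1 - h / b)) h = 0) ∧
    (pdy (Nx2 a h b) a 0 = 1 ∧ pdy (Nx2 a h b) 0 0 = 0 ∧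
      pdy (Nx2 a h b) (a * (1 - h / b)) h = 0) ∧
    (pdy (Nx3 a h b) (a * (1 - h / b)) h = 1 ∧ pdy (Nx3 a h b) 0 0 = 0 ∧
      pdy (Nx3 a h b) a 0 = 0) :=
  Nx2_Nx3_kronecker_delta_general a h b ha hh
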